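/- For a > 0 and n > 2a, the Hirzebruch surface F_a polarized by the very ample line bundle H of type (2,n) carries no Ulrich line bundle. In contrast, F_0 = P^1 × P^1 with H of type (2,n) carries Ulrich line bundles of types (1, 2n-1) and (3, n-1). -/
import Mathlib


/-- `h^0(ℙ¹, O(m))` (as an integer). -/
def h0P1 (m : ℤ) : ℤ := if 0 ≤ m then m + 1 else 0

/-- `h^0(F_a, O(s,t))`: pushing forward to `ℙ¹`,
`H^0(F_a, O(s,t)) = ⊕_{j=0}^{s} H^0(ℙ¹, O(t - ja))` for `s ≥ 0` and `0` for `s < 0`. -/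
def h0F (a s t : ℤ) : ℤ :=
  if 0 ≤ s then ∑ j ∈ Finset.range (s.toNat + 1), h0P1 (t - (j : ℤ) * a) else 0

/-- `χ(F_a, O(s,t)) = (s+1)(t+1) - a·s(s+1)/2` (Riemann–Roch, `K = (-2, a-2)`). -/
def chiF (a s t : ℤ) : ℤ := (s + 1) * (t + 1) - a * (s * (s + 1) / 2)

/-- `h^2(F_a, O(s,t)) = h^0(F_a, O(K - (s,t)))` by Serre duality. -/
def h2F (a s t : ℤ) : ℤ := h0F a (-2 - s) (a - 2 - t)

/-- `h^1 = h^0 + h^2 - χ`. -/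
def h1F (a s t : ℤ) : ℤ := h0F a s t + h2F a s t - chiF a s t

/-- `L = O(s,t)` is an Ulrich line bundle on `(F_a, H = O(2,n))`:
`H^0(L-H) = H^1(L-H) = H^1(L-2H) = H^2(L-2H) = 0`. -/
def IsUlrichLB (a n s t : ℤ) : Prop :=
  h0F a (s - 2) (t - n) = 0 ∧ h1F a (s - 2) (t - n) = 0 ∧
  h1F a (s - 4) (t - 2*n) = 0 ∧ h2F a (s - 4) (t - 2*n) = 0

lemma h0P1_nonneg (m : ℤ) : 0 ≤ h0P1 m := by unfold h0P1; split <;> omega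

lemma h0F_neg (a s t : ℤ) (hs : s < 0) : h0F a s t = 0 := by
  unfold h0F; rw [if_neg (by omega)]

lemma h0F_zero_of_neg (a s t : ℤ) (ha : 0 ≤ a) (ht : t < 0) : h0F a s t = 0 := by
  unfold h0F; split
  · apply Finset.sum_eq_zero; intro j _
    unfold h0P1
    rw [if_neg]
    have : (0:ℤ) ≤ (j:ℤ) * a := mul_nonneg (by positivity) ha
    omega
  · rfl

lemma t_neg_of_h0F_zero (a s t : ℤ) (hs : 0 ≤ s) (h : h0F a s t = 0) : t < 0 := by
  unfold h0F at h
  rw [if_pos hs] at h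
  have mem : 0 ∈ Finset.range (s.toNat + 1) := by simp
  have h0 := (Finset.sum_eq_zero_iff_of_nonneg (fun j _ => h0P1_nonneg _)).mp h 0 mem
  simp only [Nat.cast_zero, zero_mul, sub_zero] at h0
  unfold h0P1 at h0
  by_contra hc
  rw [if_pos (by omega)] at h0
  omega

lemma chi_lin (a s t : ℤ) (hs : s + 1 ≠ 0) (h : chiF a s t = 0) : 2*(t+1) = a*s := by
  obtain ⟨k, hk⟩ := Int.even_mul_succ_self s
  have hdiv : s * (s + 1) / 2 = k := by omega
  unfold chiF at h
  rw [hdiv] at h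
  have h2 : (s + 1) * (2*(t+1) - a*s) = 0 := by linear_combination 2*h - a*hk
  rcases mul_eq_zero.mp h2 with h3 | h3
  · exact absurd h3 hs
  · omega

/-- For `a > 0` and `n > 2a`, the Hirzebruch surface `F_a` polarized by `H`
of type `(2,n)` carries no Ulrich line bundle; in contrast `F_0 = ℙ¹×ℙ¹` with `H` of type
`(2,n)` carries Ulrich line bundles of types `(1, 2n-1)` and `(3, n-1)`. -/
theorem hirzebruch_no_ulrich_line_bundle :
    (∀ a n : ℤ, 0 < a → 2*a < n → ¬ ∃ s t : ℤ, IsUlrichLB a n s t) ∧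
    (∀ n : ℤ, 0 < n → IsUlrichLB 0 n 1 (2*n - 1) ∧ IsUlrichLB 0 n 3 (n - 1)) := by
  constructor
  · rintro a n ha hn ⟨s, t, hC1, hC2, hC3, hC4⟩
    simp only [IsUlrichLB, h1F, h2F] at hC1 hC2 hC3 hC4
    have hs : s ≤ 0 ∨ s = 1 ∨ s = 2 ∨ s = 3 ∨ 4 ≤ s := by omega
    rcases hs with hs | hs | hs | hs | hs
    · have ht2 : a - 2 - (t - 2*n) < 0 :=
        t_neg_of_h0F_zero a (-2 - (s-4)) _ (by omega) hC4
      have h03 : h0F a (s-4) (t-2*n) = 0 := h0F_neg _ _ _ (by omega)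
      have hchi : chiF a (s-4) (t-2*n) = 0 := by rw [h03, hC4] at hC3; omega
      have hl := chi_lin a (s-4) (t-2*n) (by omega) hchi
      have hneg : a * (s-4) < 0 := mul_neg_of_pos_of_neg ha (by omega)
      omega
    · subst hs
      have ht2 : a - 2 - (t - 2*n) < 0 :=
        t_neg_of_h0F_zero a (-2 - ((1:ℤ)-4)) _ (by omega) hC4
      have h03 : h0F a ((1:ℤ)-4) (t-2*n) = 0 := h0F_neg _ _ _ (by omega)
      have hchi : chiF a ((1:ℤ)-4) (t-2*n) = 0 := by rw [h03, hC4] at hC3; omega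
      have hl := chi_lin a ((1:ℤ)-4) (t-2*n) (by omega) hchi
      omega
    · subst hs
      have ht1 : t - n < 0 := t_neg_of_h0F_zero a ((2:ℤ)-2) _ (by omega) hC1
      have ht2 : a - 2 - (t - 2*n) < 0 :=
        t_neg_of_h0F_zero a (-2 - ((2:ℤ)-4)) _ (by omega) hC4
      omega
    · subst hs
      have ht1 : t - n < 0 := t_neg_of_h0F_zero a ((3:ℤ)-2) _ (by omega) hC1
      have h2z : h0F a (-2 - ((3:ℤ)-2)) (a - 2 - (t - n)) = 0 := h0F_neg _ _ _ (by omega)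
      have hchi : chiF a ((3:ℤ)-2) (t-n) = 0 := by rw [hC1, h2z] at hC2; omega
      have hl := chi_lin a ((3:ℤ)-2) (t-n) (by omega) hchi
      omega
    · have ht1 : t - n < 0 := t_neg_of_h0F_zero a (s-2) _ (by omega) hC1
      have h2z : h0F a (-2 - (s-2)) (a - 2 - (t - n)) = 0 := h0F_neg _ _ _ (by omega)
      have hchi1 : chiF a (s-2) (t-n) = 0 := by rw [hC1, h2z] at hC2; omega
      have h02 : h0F a (s-4) (t-2*n) = 0 := h0F_zero_of_neg _ _ _ (by omega) (by omega)
      have hchi2 : chiF a (s-4) (t-2*n) = 0 := by rw [h02, hC4] at hC3; omega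
      have hl1 := chi_lin a (s-2) (t-n) (by omega) hchi1
      have hl2 := chi_lin a (s-4) (t-2*n) (by omega) hchi2
      have : a*(s-2) - a*(s-4) = 2*a := by ring
      omega
  · intro n hn
    constructor <;>
    · refine ⟨?_, ?_, ?_, ?_⟩ <;>
      · simp only [IsUlrichLB, h1F, h2F, h0F, chiF, h0P1]
        norm_num [Finset.sum_range_succ]
        try omega
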